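/- arXiv:2603.21373 — 2 statements merged into one kernel-verified Lean document; each statement's English description precedes it below -/
import Mathlib

section
/- Gumbel-max trick (argmax case): if g_1,…,g_n are i.i.d. standard Gumbel random variables and θ ∈ ℝ^n, then P(argmax_i (θ_i + g_i) = k) = exp(θ_k)/∑_{j=1}^n exp(θ_j) for each k, and the argmax is almost surely unique. -/
/-!
With `F t = exp (-exp (-t))`, max-stability `F (y + c) = F y ^ exp (-c)` does all the work.
Conditionally on `g k = y`, the index `k` is the strict argmax with probability
`∏_{j ≠ k} F (y + θ k - θ j) = F y ^ a`, where `a = ∑_{j ≠ k} exp (θ j - θ k)`.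
Since `F (g k)` is uniform on `(0, 1)`, the expectation of `F (g k) ^ a` is
`1 / (1 + a) = exp (θ k) / ∑ j, exp (θ j)`.
Ties are null because the Gumbel law has no atoms and the `g i` are independent.
-/

open MeasureTheory ProbabilityTheory Set Filter Topology

noncomputable def gumbelCDF (t : ℝ) : ℝ := Real.exp (-Real.exp (-t))

lemma gumbelCDF_pos (t : ℝ) : 0 < gumbelCDF t := Real.exp_pos _

lemma gumbelCDF_lt_one (t : ℝ) : gumbelCDF t < 1 :=
  Real.exp_lt_one_iff.2 (neg_neg_of_pos (Real.exp_pos _))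

lemma strictMono_gumbelCDF : StrictMono gumbelCDF := fun _ _ h =>
  Real.exp_lt_exp.2 (neg_lt_neg (Real.exp_lt_exp.2 (neg_lt_neg h)))

lemma continuous_gumbelCDF : Continuous gumbelCDF := by
  unfold gumbelCDF; fun_prop

lemma tendsto_gumbelCDF_atBot : Tendsto gumbelCDF atBot (𝓝 0) :=
  Real.tendsto_exp_atBot.comp <| tendsto_neg_atTop_atBot.comp <|
    Real.tendsto_exp_atTop.comp tendsto_neg_atBot_atTop

lemma tendsto_gumbelCDF_atTop : Tendsto gumbelCDF atTop (𝓝 1) := by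
  unfold gumbelCDF
  have h : Tendsto (fun t : ℝ => -Real.exp (-t)) atTop (𝓝 0) := by
    simpa using (Real.tendsto_exp_atBot.comp tendsto_neg_atTop_atBot).neg
  have := (Real.continuous_exp.tendsto 0).comp h
  rwa [Real.exp_zero] at this

lemma gumbelCDF_neg_log_neg_log {u : ℝ} (h0 : 0 < u) (h1 : u < 1) :
    gumbelCDF (-Real.log (-Real.log u)) = u := by
  have : 0 < -Real.log u := neg_pos.2 (Real.log_neg h0 h1)
  rw [gumbelCDF, neg_neg, Real.exp_log this, neg_neg, Real.exp_log h0]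

lemma gumbelCDF_add (y c : ℝ) : gumbelCDF (y + c) = gumbelCDF y ^ Real.exp (-c) := by
  rw [Real.rpow_def_of_pos (gumbelCDF_pos y), gumbelCDF, gumbelCDF, Real.log_exp, neg_add,
    Real.exp_add]
  ring_nf

noncomputable def gumbelStieltjes : StieltjesFunction ℝ where
  toFun := gumbelCDF
  mono' := strictMono_gumbelCDF.monotone
  right_continuous' _ := continuous_gumbelCDF.continuousWithinAt

lemma coe_gumbelStieltjes : ⇑gumbelStieltjes = gumbelCDF := rfl

noncomputable def gumbel : Measure ℝ := gumbelStieltjes.measure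

instance : IsProbabilityMeasure gumbel :=
  gumbelStieltjes.isProbabilityMeasure tendsto_gumbelCDF_atBot tendsto_gumbelCDF_atTop

instance : NullSingletonClass gumbel := ⟨fun t => by
  rw [gumbel, StieltjesFunction.measure_singleton, coe_gumbelStieltjes,
    continuous_gumbelCDF.continuousWithinAt.leftLim_eq, sub_self, ENNReal.ofReal_zero]⟩

lemma gumbel_Iic (t : ℝ) : gumbel (Iic t) = ENNReal.ofReal (gumbelCDF t) := by
  rw [gumbel, gumbelStieltjes.measure_Iic tendsto_gumbelCDF_atBot, sub_zero, coe_gumbelStieltjes]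

lemma gumbel_Iio (t : ℝ) : gumbel (Iio t) = ENNReal.ofReal (gumbelCDF t) := by
  rw [measure_congr Iio_ae_eq_Iic, gumbel_Iic]

lemma map_gumbelCDF_gumbel : gumbel.map gumbelCDF = volume.restrict (Ioc 0 1) := by
  refine Measure.ext_of_Iic _ _ fun s => ?_
  rw [Measure.map_apply continuous_gumbelCDF.measurable measurableSet_Iic,
    Measure.restrict_apply measurableSet_Iic]
  rcases le_or_gt s 0 with hs0 | hs0
  · have h₁ : gumbelCDF ⁻¹' Iic s = ∅ :=
      eq_empty_of_forall_notMem fun y hy => (hs0.trans_lt (gumbelCDF_pos y)).not_ge hy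
    have h₂ : Iic s ∩ Ioc 0 1 = ∅ :=
      eq_empty_of_forall_notMem fun u hu => (hs0.trans_lt hu.2.1).not_ge hu.1
    rw [h₁, h₂, measure_empty, measure_empty]
  rcases lt_or_ge s 1 with hs1 | hs1
  · set c := -Real.log (-Real.log s)
    have hc : gumbelCDF c = s := gumbelCDF_neg_log_neg_log hs0 hs1
    have h₁ : gumbelCDF ⁻¹' Iic s = Iic c := by
      ext y; simp [← hc, strictMono_gumbelCDF.le_iff_le]
    have h₂ : Iic s ∩ Ioc 0 1 = Ioc 0 s := by
      ext u; simp only [mem_inter_iff, mem_Iic, mem_Ioc]; grind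
    rw [h₁, h₂, gumbel_Iic, hc, Real.volume_Ioc, sub_zero]
  · have h₁ : gumbelCDF ⁻¹' Iic s = univ :=
      eq_univ_of_forall fun y => (gumbelCDF_lt_one y).le.trans hs1
    have h₂ : Iic s ∩ Ioc 0 1 = Ioc 0 1 := inter_eq_right.2 fun u hu => hu.2.trans hs1
    rw [h₁, h₂, measure_univ, Real.volume_Ioc, sub_zero, ENNReal.ofReal_one]

lemma lintegral_gumbelCDF_rpow {a : ℝ} (ha : 0 ≤ a) :
    ∫⁻ y, ENNReal.ofReal (gumbelCDF y ^ a) ∂gumbel = ENNReal.ofReal (1 / (a + 1)) := by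
  have hint : IntegrableOn (fun u : ℝ => u ^ a) (Ioc 0 1) :=
    (intervalIntegral.intervalIntegrable_rpow' (by linarith)).1
  rw [← lintegral_map (f := fun u => ENNReal.ofReal (u ^ a)) (by fun_prop)
    continuous_gumbelCDF.measurable, map_gumbelCDF_gumbel,
    ← ofReal_integral_eq_lintegral_ofReal hint
      ((ae_restrict_mem measurableSet_Ioc).mono fun u hu => Real.rpow_nonneg hu.1.le a),
    ← intervalIntegral.integral_of_le zero_le_one, integral_rpow (Or.inl (by linarith)),
    Real.one_rpow, Real.zero_rpow (by linarith), sub_zero]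

lemma ProbabilityTheory.IndepFun.measure_add_eq_add_eq_zero {Ω : Type*} [MeasurableSpace Ω]
    {μ : Measure Ω} [IsFiniteMeasure μ] {X Y : Ω → ℝ} (hX : Measurable X) (hY : Measurable Y)
    (hXY : IndepFun X Y μ) [NullSingletonClass (μ.map Y)] (a b : ℝ) :
    μ {ω | a + X ω = b + Y ω} = 0 := by
  set S := {p : ℝ × ℝ | a + p.1 = b + p.2}
  have hS : MeasurableSet S := measurableSet_eq_fun (by fun_prop) (by fun_prop)
  have hfiber (x : ℝ) : Prod.mk x ⁻¹' S = {a + x - b} := by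
    ext y; simp only [S, mem_preimage, mem_ofPred_eq, mem_singleton_iff]
    constructor <;> intro <;> linarith
  change μ ((fun ω => (X ω, Y ω)) ⁻¹' S) = 0
  rw [← Measure.map_apply (hX.prodMk hY) hS,
    (indepFun_iff_map_prod_eq_prod_map_map hX.aemeasurable hY.aemeasurable).1 hXY,
    Measure.prod_apply hS]
  simp [hfiber]

lemma MeasureTheory.Measure.pi_setOf_forall_ne_lt_add {m : ℕ} (ν : Fin (m + 1) → Measure ℝ)
    [∀ i, SigmaFinite (ν i)] (k : Fin (m + 1)) (c : Fin (m + 1) → ℝ) :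
    Measure.pi ν {x | ∀ j ≠ k, x j < x k + c j}
      = ∫⁻ y, ∏ j : Fin m, ν (k.succAbove j) (Iio (y + c (k.succAbove j))) ∂ν k := by
  set e := MeasurableEquiv.piFinSuccAbove (fun _ => ℝ) k
  set B : Set (ℝ × (Fin m → ℝ)) := {p | ∀ j, p.2 j < p.1 + c (k.succAbove j)}
  have hB : MeasurableSet B := by
    simp only [B, ofPred_forall]
    exact MeasurableSet.iInter fun j => measurableSet_lt (by fun_prop) (by fun_prop)
  have hpre : e ⁻¹' B = {x | ∀ j ≠ k, x j < x k + c j} := by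
    ext x
    simp only [e, B, MeasurableEquiv.piFinSuccAbove_apply, mem_preimage, mem_ofPred_eq,
      Fin.insertNthEquiv, Equiv.coe_fn_symm_mk, Fin.removeNth]
    exact ⟨fun h j hj => by obtain ⟨j, rfl⟩ := Fin.exists_succAbove_eq hj; exact h j,
      fun h j => h _ (Fin.succAbove_ne k j)⟩
  rw [← hpre, ← Measure.map_apply e.measurable hB, (measurePreserving_piFinSuccAbove ν k).map_eq,
    Measure.prod_apply hB]
  congr 1 with y
  rw [show Prod.mk y ⁻¹' B = univ.pi fun j => Iio (y + c (k.succAbove j)) by ext; simp [B],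
    Measure.pi_pi]

lemma pi_gumbel_argmax_eq_softmax {n : ℕ} (θ : Fin n → ℝ) (k : Fin n) :
    Measure.pi (fun _ => gumbel) {x | ∀ j ≠ k, θ j + x j < θ k + x k}
      = ENNReal.ofReal (Real.exp (θ k) / ∑ j, Real.exp (θ j)) := by
  obtain ⟨m, rfl⟩ : ∃ m, n = m + 1 := Nat.exists_eq_add_one.2 k.pos
  have hset : {x : Fin (m + 1) → ℝ | ∀ j ≠ k, θ j + x j < θ k + x k}
      = {x | ∀ j ≠ k, x j < x k + (θ k - θ j)} := by
    ext x
    simp only [mem_ofPred_eq]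
    refine forall₂_congr fun j _ => ?_
    constructor <;> intro <;> linarith
  have hprod (y : ℝ) : ∏ j : Fin m, gumbel (Iio (y + (θ k - θ (k.succAbove j))))
      = ENNReal.ofReal (gumbelCDF y ^ ∑ j : Fin m, Real.exp (θ (k.succAbove j) - θ k)) := by
    simp_rw [gumbel_Iio, gumbelCDF_add, neg_sub]
    rw [← ENNReal.ofReal_prod_of_nonneg fun j _ => (Real.rpow_pos_of_pos (gumbelCDF_pos y) _).le,
      Real.rpow_sum_of_pos (gumbelCDF_pos y)]
  rw [hset, Measure.pi_setOf_forall_ne_lt_add]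
  simp_rw [hprod]
  rw [lintegral_gumbelCDF_rpow (by positivity), Fin.sum_univ_succAbove _ k]
  congr 1
  simp_rw [Real.exp_sub]
  rw [← Finset.sum_div]
  field_simp
  ring

lemma map_eq_gumbel {Ω : Type*} [MeasurableSpace Ω] {μ : Measure Ω} {X : Ω → ℝ}
    (hX : Measurable X) (h : ∀ t, μ {ω | X ω ≤ t} = ENNReal.ofReal (gumbelCDF t)) :
    μ.map X = gumbel :=
  (Measure.ext_of_Iic _ _ fun t => by
    rw [Measure.map_apply hX measurableSet_Iic, gumbel_Iic]; exact (h t).symm).symm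

/-- Gumbel-max trick: with i.i.d. standard Gumbel perturbations g_i and logits θ,
the argmax of θ_i + g_i is almost surely unique, and equals k with the softmax
probability exp(θ k) / ∑ j exp(θ j). -/
theorem gumbel_max_trick {Ω : Type*} [MeasurableSpace Ω]
    (μ : Measure Ω) [IsProbabilityMeasure μ]
    (n : ℕ) (θ : Fin n → ℝ) (g : Fin n → Ω → ℝ)
    (hmeas : ∀ i, Measurable (g i))
    (hindep : iIndepFun g μ)
    (hgumbel : ∀ i t, μ {ω | g i ω ≤ t} = ENNReal.ofReal (Real.exp (-Real.exp (-t)))) :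
    (μ {ω | ∃ i j, i ≠ j ∧ θ i + g i ω = θ j + g j ω} = 0) ∧
    ∀ k : Fin n,
      μ {ω | ∀ j, j ≠ k → θ j + g j ω < θ k + g k ω}
        = ENNReal.ofReal (Real.exp (θ k) / ∑ j : Fin n, Real.exp (θ j)) := by
  have hlaw (i : Fin n) : μ.map (g i) = gumbel := map_eq_gumbel (hmeas i) (hgumbel i)
  refine ⟨?_, fun k => ?_⟩
  · have hpair (i j : Fin n) (hij : i ≠ j) : μ {ω | θ i + g i ω = θ j + g j ω} = 0 := by
      have : NullSingletonClass (μ.map (g j)) := hlaw j ▸ inferInstance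
      exact (hindep.indepFun hij).measure_add_eq_add_eq_zero (hmeas i) (hmeas j) _ _
    simp only [ofPred_exists]
    refine measure_iUnion_null fun i => measure_iUnion_null fun j => ?_
    rcases eq_or_ne i j with rfl | hij
    · simp
    · exact measure_mono_null (fun ω h => h.2) (hpair i j hij)
  · set A := {x : Fin n → ℝ | ∀ j ≠ k, θ j + x j < θ k + x k}
    have hA : MeasurableSet A := by measurability
    rw [show {ω | ∀ j, j ≠ k → θ j + g j ω < θ k + g k ω} = (fun ω i => g i ω) ⁻¹' A from rfl,
      ← Measure.map_apply (measurable_pi_lambda _ hmeas) hA,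
      hindep.map_fun_eq_pi_map fun i => (hmeas i).aemeasurable]
    simp_rw [hlaw]
    exact pi_gumbel_argmax_eq_softmax θ k
end

section
/- Pairwise marginal of the Gumbel-perturbed scores: if g_a, g_b are independent standard Gumbel and θ_a, θ_b ∈ ℝ, then P(θ_a + g_a > θ_b + g_b) = exp(θ_a)/(exp(θ_a) + exp(θ_b)) (the Bradley–Terry comparison probability). -/
/-!
Write `G_a(t) = exp (-a e^{-t})` for the CDF of the Gumbel law with location `log a`, and `g_a`
for its density `a e^{-t} G_a(t)`. Since `G_a G_b = G_{a+b}`, one has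
`g_a G_b = a / (a + b) · g_{a+b}`. Hence for independent `X ~ G_a`, `Y ~ G_b`,
`P(Y < X) = ∫ G_b dG_a = a / (a + b)`. Apply this to `X = θa + ga ~ G_{exp θa}` and
`Y = θb + gb ~ G_{exp θb}`.
-/

open MeasureTheory ProbabilityTheory Real Set Filter Topology

noncomputable def gumbelCDFReal (a t : ℝ) : ℝ := exp (-(a * exp (-t)))

noncomputable def gumbelPDFReal (a t : ℝ) : ℝ := a * exp (-t) * gumbelCDFReal a t

noncomputable def gumbelMeasure (a : ℝ) : Measure ℝ :=
  volume.withDensity fun t ↦ ENNReal.ofReal (gumbelPDFReal a t)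

section Gumbel

variable {a : ℝ}

lemma gumbelCDFReal_exp (m t : ℝ) : gumbelCDFReal (exp m) t = exp (-exp (-(t - m))) := by
  rw [gumbelCDFReal, ← exp_add, neg_sub, sub_eq_neg_add, add_comm]

lemma continuous_gumbelPDFReal (a : ℝ) : Continuous (gumbelPDFReal a) := by
  unfold gumbelPDFReal gumbelCDFReal; fun_prop

lemma gumbelPDFReal_nonneg (ha : 0 ≤ a) (t : ℝ) : 0 ≤ gumbelPDFReal a t := by
  unfold gumbelPDFReal gumbelCDFReal; positivity

lemma hasDerivAt_gumbelCDFReal (a t : ℝ) :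
    HasDerivAt (gumbelCDFReal a) (gumbelPDFReal a t) t := by
  refine ((hasDerivAt_neg t).exp.const_mul a).neg.exp.congr_deriv ?_
  simp only [gumbelPDFReal, gumbelCDFReal, Pi.neg_apply]
  ring

lemma tendsto_gumbelCDFReal_atBot (ha : 0 < a) : Tendsto (gumbelCDFReal a) atBot (𝓝 0) :=
  tendsto_exp_atBot.comp <| tendsto_neg_atTop_atBot.comp <|
    (tendsto_exp_atTop.comp tendsto_neg_atBot_atTop).const_mul_atTop ha

lemma tendsto_gumbelCDFReal_atTop (a : ℝ) : Tendsto (gumbelCDFReal a) atTop (𝓝 1) := by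
  have h : Tendsto (fun t ↦ -(a * exp (-t))) atTop (𝓝 0) := by
    simpa using ((tendsto_exp_atBot.comp tendsto_neg_atTop_atBot).const_mul a).neg
  rw [← exp_zero]
  exact (continuous_exp.tendsto 0).comp h

lemma integrableOn_Iic_gumbelPDFReal (ha : 0 < a) (t : ℝ) :
    IntegrableOn (gumbelPDFReal a) (Iic t) := by
  refine integrableOn_Iic_of_intervalIntegral_norm_tendsto (gumbelCDFReal a t - 0) t
    (fun _ ↦ (continuous_gumbelPDFReal a).integrableOn_Ioc) tendsto_id ?_
  have hint (s : ℝ) :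
      ∫ x in s..t, ‖gumbelPDFReal a x‖ = gumbelCDFReal a t - gumbelCDFReal a s := by
    simp only [norm_of_nonneg (gumbelPDFReal_nonneg ha.le _)]
    exact intervalIntegral.integral_eq_sub_of_hasDerivAt
      (fun x _ ↦ hasDerivAt_gumbelCDFReal a x)
      ((continuous_gumbelPDFReal a).intervalIntegrable s t)
  simpa only [id, hint] using (tendsto_gumbelCDFReal_atBot ha).const_sub (gumbelCDFReal a t)

lemma gumbelMeasure_Iic (ha : 0 < a) (t : ℝ) :
    gumbelMeasure a (Iic t) = ENNReal.ofReal (gumbelCDFReal a t) := by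
  rw [gumbelMeasure, withDensity_apply _ measurableSet_Iic,
    ← ofReal_integral_eq_lintegral_ofReal (integrableOn_Iic_gumbelPDFReal ha t)
      (.of_forall (gumbelPDFReal_nonneg ha.le)),
    integral_Iic_of_hasDerivAt_of_tendsto' (fun x _ ↦ hasDerivAt_gumbelCDFReal a x)
      (integrableOn_Iic_gumbelPDFReal ha t) (tendsto_gumbelCDFReal_atBot ha), sub_zero]

lemma isProbabilityMeasure_gumbelMeasure (ha : 0 < a) :
    IsProbabilityMeasure (gumbelMeasure a) := by
  refine ⟨tendsto_nhds_unique (tendsto_measure_Iic_atTop _) ?_⟩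
  simp only [gumbelMeasure_Iic ha]
  simpa using ENNReal.tendsto_ofReal (tendsto_gumbelCDFReal_atTop a)

lemma gumbelPDFReal_mul_gumbelCDFReal {b : ℝ} (hab : a + b ≠ 0) (t : ℝ) :
    gumbelPDFReal a t * gumbelCDFReal b t = a / (a + b) * gumbelPDFReal (a + b) t := by
  simp only [gumbelPDFReal, gumbelCDFReal]
  field_simp
  rw [mul_assoc, ← exp_add]
  ring_nf

lemma lintegral_gumbelCDFReal_gumbelMeasure {b : ℝ} (ha : 0 < a) (hb : 0 < b) :
    ∫⁻ t, ENNReal.ofReal (gumbelCDFReal b t) ∂gumbelMeasure a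
      = ENNReal.ofReal (a / (a + b)) := by
  have hab : 0 < a + b := add_pos ha hb
  have htotal : ∫⁻ t, ENNReal.ofReal (gumbelPDFReal (a + b) t) = 1 := by
    rw [← setLIntegral_univ, ← withDensity_apply _ .univ]
    exact (isProbabilityMeasure_gumbelMeasure hab).measure_univ
  have hprod (t : ℝ) : ENNReal.ofReal (gumbelPDFReal a t) * ENNReal.ofReal (gumbelCDFReal b t)
      = ENNReal.ofReal (a / (a + b)) * ENNReal.ofReal (gumbelPDFReal (a + b) t) := by
    rw [← ENNReal.ofReal_mul (gumbelPDFReal_nonneg ha.le t),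
      gumbelPDFReal_mul_gumbelCDFReal hab.ne', ENNReal.ofReal_mul (by positivity)]
  rw [gumbelMeasure, lintegral_withDensity_eq_lintegral_mul _
      (continuous_gumbelPDFReal a).measurable.ennreal_ofReal
      (by unfold gumbelCDFReal; fun_prop)]
  simp only [Pi.mul_apply, hprod]
  rw [lintegral_const_mul _ (continuous_gumbelPDFReal _).measurable.ennreal_ofReal, htotal,
    mul_one]

instance (a : ℝ) : NullSingletonClass (gumbelMeasure a) := by
  unfold gumbelMeasure; infer_instance

lemma gumbelMeasure_Iio (ha : 0 < a) (t : ℝ) :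
    gumbelMeasure a (Iio t) = ENNReal.ofReal (gumbelCDFReal a t) := by
  rw [measure_congr Iio_ae_eq_Iic, gumbelMeasure_Iic ha]

lemma map_eq_gumbelMeasure {Ω : Type*} [MeasurableSpace Ω] {μ : Measure Ω} [IsFiniteMeasure μ]
    {X : Ω → ℝ} (hX : Measurable X) (ha : 0 < a)
    (hcdf : ∀ t, μ {ω | X ω ≤ t} = ENNReal.ofReal (gumbelCDFReal a t)) :
    μ.map X = gumbelMeasure a := by
  have := isProbabilityMeasure_gumbelMeasure ha
  refine Measure.ext_of_Iic _ _ fun t ↦ ?_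
  rw [Measure.map_apply hX measurableSet_Iic, gumbelMeasure_Iic ha]
  exact hcdf t

end Gumbel

lemma measure_lt_eq_lintegral_map_Iio {Ω : Type*} [MeasurableSpace Ω] {μ : Measure Ω}
    [IsFiniteMeasure μ] {X Y : Ω → ℝ} (hX : Measurable X) (hY : Measurable Y)
    (hXY : IndepFun X Y μ) :
    μ {ω | Y ω < X ω} = ∫⁻ x, μ.map Y (Iio x) ∂μ.map X := by
  have hS : MeasurableSet {p : ℝ × ℝ | p.2 < p.1} :=
    measurableSet_lt measurable_snd measurable_fst
  rw [show {ω | Y ω < X ω} = (fun ω ↦ (X ω, Y ω)) ⁻¹' {p | p.2 < p.1} from rfl,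
    ← Measure.map_apply (hX.prodMk hY) hS,
    (indepFun_iff_map_prod_eq_prod_map_map hX.aemeasurable hY.aemeasurable).mp hXY,
    Measure.prod_apply hS]
  rfl

/-- Pairwise marginal of Gumbel-perturbed scores: for independent standard
Gumbel g_a, g_b, P(θ_a + g_a > θ_b + g_b) = exp θ_a / (exp θ_a + exp θ_b). -/
theorem gumbel_pairwise_bradley_terry {Ω : Type*} [MeasurableSpace Ω]
    (μ : Measure Ω) [IsProbabilityMeasure μ]
    (θa θb : ℝ) (ga gb : Ω → ℝ)
    (hma : Measurable ga) (hmb : Measurable gb)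
    (hindep : IndepFun ga gb μ)
    (hga : ∀ t, μ {ω | ga ω ≤ t} = ENNReal.ofReal (Real.exp (-Real.exp (-t))))
    (hgb : ∀ t, μ {ω | gb ω ≤ t} = ENNReal.ofReal (Real.exp (-Real.exp (-t)))) :
    μ {ω | θb + gb ω < θa + ga ω}
      = ENNReal.ofReal (Real.exp θa / (Real.exp θa + Real.exp θb)) := by
  have hshift {θ : ℝ} {g : Ω → ℝ} (hm : Measurable g)
      (hcdf : ∀ t, μ {ω | g ω ≤ t} = ENNReal.ofReal (exp (-exp (-t)))) :
      μ.map (fun ω ↦ θ + g ω) = gumbelMeasure (exp θ) := by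
    refine map_eq_gumbelMeasure (hm.const_add θ) (exp_pos θ) fun t ↦ ?_
    simp only [gumbelCDFReal_exp, ← hcdf (t - θ), le_sub_iff_add_le']
  rw [measure_lt_eq_lintegral_map_Iio (hma.const_add θa) (hmb.const_add θb)
      (hindep.comp (measurable_const_add θa) (measurable_const_add θb)),
    hshift hma hga, hshift hmb hgb]
  simp only [gumbelMeasure_Iio (exp_pos θb)]
  exact lintegral_gumbelCDFReal_gumbelMeasure (exp_pos θa) (exp_pos θb)
end
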